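/- arXiv:1203.1126 — 2 statements merged into one kernel-verified Lean document; each statement's English description precedes it below -/
import Mathlib

section
/- Let U be a nonprincipal ultrafilter on ℕ such that for every 2-bounded coloring χ : [ℕ]² → ℕ there is a set A ∈ U polychromatic for χ (i.e. U is rainbow Ramsey). Then for every k ≥ 1 and every k-bounded coloring χ : [ℕ]² → ℕ there is A ∈ U polychromatic for χ. -/
/-- `Y` is polychromatic for the coloring `χ`, given as a function on ordered pairs `a < b`. -/
def Polychromatic (χ : ℕ → ℕ → ℕ) (Y : Set ℕ) : Prop :=
  ∀ a b c d : ℕ, a ∈ Y → b ∈ Y → c ∈ Y → d ∈ Y → a < b → c < d →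
    χ a b = χ c d → a = c ∧ b = d

/-- `χ` is `k`-bounded: every color is received by at most `k` pairs. -/
def KBounded (k : ℕ) (χ : ℕ → ℕ → ℕ) : Prop :=
  ∀ c : ℕ, {p : ℕ × ℕ | p.1 < p.2 ∧ χ p.1 p.2 = c}.encard ≤ k

/-- The color class of `c`. -/
def Cls (χ : ℕ → ℕ → ℕ) (c : ℕ) : Set (ℕ × ℕ) := {q | q.1 < q.2 ∧ χ q.1 q.2 = c}

/-- Rank of a pair within its color class, ordered by `Nat.pair`. -/
noncomputable def rk (χ : ℕ → ℕ → ℕ) (p : ℕ × ℕ) : ℕ :=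
  {q | q ∈ Cls χ (χ p.1 p.2) ∧ Nat.pair q.1 q.2 < Nat.pair p.1 p.2}.ncard

lemma cls_finite {χ : ℕ → ℕ → ℕ} {k : ℕ} (hk : KBounded k χ) (c : ℕ) :
    (Cls χ c).Finite := Set.finite_of_encard_le_coe (hk c)

lemma rk_lt {χ : ℕ → ℕ → ℕ} {k : ℕ} (hk : KBounded k χ) {p : ℕ × ℕ}
    (hp : p.1 < p.2) : rk χ p < k := by
  have hfin := cls_finite hk (χ p.1 p.2)
  have hmem : p ∈ Cls χ (χ p.1 p.2) := ⟨hp, rfl⟩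
  have hss : {q | q ∈ Cls χ (χ p.1 p.2) ∧ Nat.pair q.1 q.2 < Nat.pair p.1 p.2}
      ⊂ Cls χ (χ p.1 p.2) := by
    constructor
    · intro q hq; exact hq.1
    · intro h
      exact absurd ((h hmem).2) (lt_irrefl _)
  have h1 : rk χ p < (Cls χ (χ p.1 p.2)).ncard := Set.ncard_lt_ncard hss hfin
  have h2 : (Cls χ (χ p.1 p.2)).ncard ≤ k := by
    obtain ⟨hf, n₀, hn₀, hle⟩ := Set.encard_le_coe_iff.mp (hk (χ p.1 p.2))
    have : (Cls χ (χ p.1 p.2)).encard = (n₀ : ℕ∞) := hn₀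
    rw [Set.ncard_def, this]; simpa using hle
  omega

lemma rk_injOn {χ : ℕ → ℕ → ℕ} {k : ℕ} (hk : KBounded k χ) {p q : ℕ × ℕ}
    (hp : p.1 < p.2) (hq : q.1 < q.2) (hχ : χ p.1 p.2 = χ q.1 q.2)
    (hr : rk χ p = rk χ q) : p = q := by
  have key : ∀ p q : ℕ × ℕ, p.1 < p.2 → q.1 < q.2 → χ p.1 p.2 = χ q.1 q.2 →
      Nat.pair p.1 p.2 < Nat.pair q.1 q.2 → rk χ p < rk χ q := by
    intro p q hp hq hχ hlt
    have hfin := cls_finite hk (χ q.1 q.2)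
    have hss : {r | r ∈ Cls χ (χ p.1 p.2) ∧ Nat.pair r.1 r.2 < Nat.pair p.1 p.2}
        ⊂ {r | r ∈ Cls χ (χ q.1 q.2) ∧ Nat.pair r.1 r.2 < Nat.pair q.1 q.2} := by
      constructor
      · intro r hr
        refine ⟨by rw [← hχ]; exact hr.1, lt_trans hr.2 hlt⟩
      · intro h
        have : p ∈ {r | r ∈ Cls χ (χ q.1 q.2) ∧ Nat.pair r.1 r.2 < Nat.pair q.1 q.2} :=
          ⟨⟨hp, hχ⟩, hlt⟩
        have := (h this).2
        exact absurd this (lt_irrefl _)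
    exact Set.ncard_lt_ncard hss (hfin.subset (fun r hr => hr.1))
  rcases lt_trichotomy (Nat.pair p.1 p.2) (Nat.pair q.1 q.2) with h | h | h
  · exact absurd hr (Nat.ne_of_lt (key p q hp hq hχ h))
  · have := Nat.pair_eq_pair.mp h
    exact Prod.ext this.1 this.2
  · exact absurd hr.symm (Nat.ne_of_lt (key q p hq hp hχ.symm h))

/-- Auxiliary 2-bounded coloring: keep the old color on pairs of rank `i` or `j`,
fresh colors elsewhere. -/
noncomputable def aux (χ : ℕ → ℕ → ℕ) (i j : ℕ) (a b : ℕ) : ℕ :=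
  if rk χ (a, b) = i ∨ rk χ (a, b) = j then Nat.pair 0 (χ a b)
  else Nat.pair 1 (Nat.pair a b)

lemma aux_two_bounded {χ : ℕ → ℕ → ℕ} {k : ℕ} (hk : KBounded k χ) (i j : ℕ) :
    KBounded 2 (aux χ i j) := by
  intro c
  set S := {p : ℕ × ℕ | p.1 < p.2 ∧ aux χ i j p.1 p.2 = c} with hS
  rcases Nat.lt_or_ge (Nat.unpair c).1 2 with hc | hc
  · interval_cases h : (Nat.unpair c).1
    · -- first component 0 : rank i or rank j in the class of (unpair c).2
      have hsub : S ⊆ {p : ℕ × ℕ | p.1 < p.2 ∧ χ p.1 p.2 = (Nat.unpair c).2 ∧ rk χ p = i}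
          ∪ {p : ℕ × ℕ | p.1 < p.2 ∧ χ p.1 p.2 = (Nat.unpair c).2 ∧ rk χ p = j} := by
        rintro ⟨a, b⟩ ⟨hab, hcol⟩
        unfold aux at hcol
        split_ifs at hcol with hr
        · have : Nat.unpair c = (0, χ a b) := by rw [← hcol, Nat.unpair_pair]
          have hχc : χ a b = (Nat.unpair c).2 := by rw [this]
          rcases hr with hr | hr
          · exact Or.inl ⟨hab, hχc, hr⟩
          · exact Or.inr ⟨hab, hχc, hr⟩
        · have : Nat.unpair c = (1, Nat.pair a b) := by rw [← hcol, Nat.unpair_pair]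
          rw [this] at h; simp at h
      calc S.encard ≤ _ := Set.encard_le_encard hsub
        _ ≤ _ := Set.encard_union_le _ _
        _ ≤ 1 + 1 := by
            gcongr
            · rw [Set.encard_le_one_iff]
              rintro p q ⟨hp1, hp2, hp3⟩ ⟨hq1, hq2, hq3⟩
              exact rk_injOn hk hp1 hq1 (hp2.trans hq2.symm) (hp3.trans hq3.symm)
            · rw [Set.encard_le_one_iff]
              rintro p q ⟨hp1, hp2, hp3⟩ ⟨hq1, hq2, hq3⟩
              exact rk_injOn hk hp1 hq1 (hp2.trans hq2.symm) (hp3.trans hq3.symm)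
        _ ≤ 2 := by norm_num
    · -- first component 1 : pair is determined by c
      have : S.encard ≤ 1 := by
        rw [Set.encard_le_one_iff]
        rintro ⟨a, b⟩ ⟨a', b'⟩ ⟨hab, hcol⟩ ⟨hab', hcol'⟩
        unfold aux at hcol hcol'
        split_ifs at hcol with hr
        · have : Nat.unpair c = (0, χ a b) := by rw [← hcol, Nat.unpair_pair]
          rw [this] at h; simp at h
        split_ifs at hcol' with hr'
        · have : Nat.unpair c = (0, χ a' b') := by rw [← hcol', Nat.unpair_pair]
          rw [this] at h; simp at h
        · have := Nat.pair_eq_pair.mp (hcol.trans hcol'.symm)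
          have := Nat.pair_eq_pair.mp this.2
          exact Prod.ext this.1 this.2
      exact this.trans (by norm_num)
  · -- first component ≥ 2 : S is empty
    have : S = ∅ := by
      ext ⟨a, b⟩
      simp only [Set.mem_empty_iff_false, iff_false]
      rintro ⟨hab, hcol⟩
      unfold aux at hcol
      split_ifs at hcol with hr
      · have : Nat.unpair c = (0, χ a b) := by rw [← hcol, Nat.unpair_pair]
        rw [this] at hc; omega
      · have : Nat.unpair c = (1, Nat.pair a b) := by rw [← hcol, Nat.unpair_pair]
        rw [this] at hc; simp at hc
    rw [this]; simp

/-- A rainbow Ramsey ultrafilter contains polychromatic sets for `k`-bounded colorings,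
for every `k ≥ 1`. -/
theorem rainbowRamsey_kBounded (U : Ultrafilter ℕ)
    (hU : ∀ s : Set ℕ, s.Finite → s ∉ U)
    (hRR : ∀ χ : ℕ → ℕ → ℕ, KBounded 2 χ → ∃ A ∈ U, Polychromatic χ A) :
    ∀ k : ℕ, 1 ≤ k → ∀ χ : ℕ → ℕ → ℕ, KBounded k χ → ∃ A ∈ U, Polychromatic χ A := by
  intro k _ χ hk
  have hRR' : ∀ ij : ℕ × ℕ, ∃ A ∈ U, Polychromatic (aux χ ij.1 ij.2) A :=
    fun ij => hRR _ (aux_two_bounded hk ij.1 ij.2)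
  choose A hAU hApoly using hRR'
  refine ⟨⋂ ij ∈ (Finset.range k ×ˢ Finset.range k), A ij, ?_, ?_⟩
  · exact (Filter.biInter_finset_mem _).mpr fun ij _ => hAU ij
  · intro a b c d ha hb hc hd hab hcd hχ
    set i := rk χ (a, b) with hi
    set j := rk χ (c, d) with hj
    have hij : (i, j) ∈ (Finset.range k ×ˢ Finset.range k) := by
      simp only [Finset.mem_product, Finset.mem_range]
      exact ⟨rk_lt hk hab, rk_lt hk hcd⟩
    have hsub : (⋂ ij ∈ (Finset.range k ×ˢ Finset.range k), A ij) ⊆ A (i, j) :=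
      Set.biInter_subset_of_mem hij
    have h1 : aux χ i j a b = Nat.pair 0 (χ a b) := by
      unfold aux; rw [if_pos (Or.inl hi.symm)]
    have h2 : aux χ i j c d = Nat.pair 0 (χ c d) := by
      unfold aux; rw [if_pos (Or.inr hj.symm)]
    exact hApoly (i, j) a b c d (hsub ha) (hsub hb) (hsub hc) (hsub hd) hab hcd
      (by rw [h1, h2, hχ])
end

section
/- There is a function Nrm : ℕ × ℕ → ℕ with the following property: for every 2-bounded coloring χ : [ℕ]² → C, every finite set X ⊆ ℕ that is normal for χ with |X| = p, and every finite set Z ⊆ ℕ with max(X) < min(Z) and |Z| ≥ Nrm(p, n), there is Y ⊆ Z with |Y| ≥ n such that X ∪ Y is normal for χ. One may take Nrm defined recursively by Nrm(p,0) = 0 and Nrm(p, n+1) = Nrm(p, n) + C(p+n, 2) + 1, where C(m,2) is the binomial coefficient. -/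
universe u

/-- `χ` is 2-bounded: every color is received by at most two pairs. -/
def TwoBounded {C : Type u} (χ : ℕ → ℕ → C) : Prop :=
  ∀ c : C, {p : ℕ × ℕ | p.1 < p.2 ∧ χ p.1 p.2 = c}.encard ≤ 2

/-- `A` is normal for `χ`: pairs from `A` with the same color have the same top element. -/
def NormalFor {C : Type u} (χ : ℕ → ℕ → C) (A : Set ℕ) : Prop :=
  ∀ a₀ a₁ b₀ b₁ : ℕ, a₀ ∈ A → a₁ ∈ A → b₀ ∈ A → b₁ ∈ A →
    a₀ < a₁ → b₀ < b₁ → χ a₀ a₁ = χ b₀ b₁ → a₁ = b₁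

def NrmF (p : ℕ) : ℕ → ℕ
  | 0 => 0
  | n + 1 => NrmF p n + (p + n).choose 2 + 1

lemma NrmF_rec (p n : ℕ) : NrmF p (n + 1) = p.choose 2 + 1 + NrmF (p + 1) n := by
  induction n generalizing p with
  | zero => simp [NrmF]
  | succ n ih =>
    calc NrmF p (n + 2) = NrmF p (n + 1) + (p + (n + 1)).choose 2 + 1 := rfl
    _ = (p.choose 2 + 1 + NrmF (p + 1) n) + (p + 1 + n).choose 2 + 1 := by
        rw [ih, show p + (n + 1) = p + 1 + n from by omega]
    _ = p.choose 2 + 1 + (NrmF (p + 1) n + (p + 1 + n).choose 2 + 1) := by ring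
    _ = p.choose 2 + 1 + NrmF (p + 1) (n + 1) := rfl

lemma pair_eq {a₀ a₁ b₀ b₁ : ℕ} (h : ({a₀, a₁} : Finset ℕ) = {b₀, b₁})
    (h1 : a₀ < a₁) (h2 : b₀ < b₁) : a₀ = b₀ ∧ a₁ = b₁ := by
  have ha := Finset.ext_iff.mp h
  simp only [Finset.mem_insert, Finset.mem_singleton] at ha
  have h3 := (ha a₀).mp (Or.inl rfl)
  have h4 := (ha a₁).mp (Or.inr rfl)
  omega

lemma two_bounded_contra {C : Type u} {χ : ℕ → ℕ → C} (hχ : TwoBounded χ)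
    {x z x' z' a₀ a₁ : ℕ} (h1 : x < z) (h2 : x' < z') (h3 : a₀ < a₁)
    (e1 : χ x z = χ a₀ a₁) (e2 : χ x' z' = χ a₀ a₁)
    (d1 : a₁ < z) (d2 : a₁ < z') (hne : z ≠ z') : False := by
  have hsub : {((a₀, a₁) : ℕ × ℕ), (x, z), (x', z')} ⊆
      {p : ℕ × ℕ | p.1 < p.2 ∧ χ p.1 p.2 = χ a₀ a₁} := by
    intro q hq
    simp only [Set.mem_insert_iff, Set.mem_singleton_iff] at hq
    rcases hq with rfl | rfl | rfl
    · exact ⟨h3, rfl⟩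
    · exact ⟨h1, e1⟩
    · exact ⟨h2, e2⟩
  have hc := (Set.encard_le_encard hsub).trans (hχ (χ a₀ a₁))
  have hnm : ((a₀, a₁) : ℕ × ℕ) ∉ ({(x, z), (x', z')} : Set (ℕ × ℕ)) := by
    intro hm
    simp only [Set.mem_insert_iff, Set.mem_singleton_iff, Prod.mk.injEq] at hm
    omega
  have hne2 : ((x, z) : ℕ × ℕ) ≠ (x', z') := by
    intro he
    simp only [Prod.mk.injEq] at he
    omega
  have h3' : ({((a₀, a₁) : ℕ × ℕ), (x, z), (x', z')} : Set (ℕ × ℕ)).encard = 3 := by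
    rw [Set.encard_insert_of_notMem hnm, Set.encard_pair hne2]; rfl
  rw [h3'] at hc
  norm_num at hc

lemma bad_card {C : Type u} {χ : ℕ → ℕ → C} (hχ : TwoBounded χ) (X Z B : Finset ℕ)
    (hXZ : ∀ x ∈ X, ∀ z ∈ Z, x < z) (hBZ : B ⊆ Z)
    (hB : ∀ z ∈ B, ∃ t : ℕ × ℕ × ℕ, t.1 ∈ X ∧ t.2.1 ∈ X ∧ t.2.2 ∈ X ∧ t.2.1 < t.2.2 ∧
      χ t.1 z = χ t.2.1 t.2.2) :
    B.card ≤ X.card.choose 2 := by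
  classical
  choose t h1 h2 h3 h4 h5 using hB
  set f : ℕ → Finset ℕ := fun z =>
    if h : z ∈ B then {(t z h).2.1, (t z h).2.2} else ∅ with hf
  have hmaps : ∀ z ∈ B, f z ∈ X.powersetCard 2 := by
    intro z hz
    simp only [hf, dif_pos hz]
    rw [Finset.mem_powersetCard]
    constructor
    · intro w hw
      rcases Finset.mem_insert.mp hw with rfl | hw
      · exact h2 z hz
      · rw [Finset.mem_singleton.mp hw]; exact h3 z hz
    · rw [Finset.card_insert_of_notMem, Finset.card_singleton]
      simp only [Finset.mem_singleton]
      have := h4 z hz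
      omega
  have hinj : Set.InjOn f ↑B := by
    intro z hz z' hz' hfe
    simp only [Finset.mem_coe] at hz hz'
    by_contra hne
    simp only [hf, dif_pos hz, dif_pos hz'] at hfe
    obtain ⟨hb0, hb1⟩ := pair_eq hfe (h4 z hz) (h4 z' hz')
    have e2 : χ (t z' hz').1 z' = χ (t z hz).2.1 (t z hz).2.2 := by
      rw [hb0, hb1]; exact h5 z' hz'
    exact two_bounded_contra hχ (hXZ _ (h1 z hz) z (hBZ hz))
      (hXZ _ (h1 z' hz') z' (hBZ hz')) (h4 z hz) (h5 z hz) e2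
      (hXZ _ (h3 z hz) z (hBZ hz))
      (by rw [hb1]; exact hXZ _ (h3 z' hz') z' (hBZ hz')) hne
  have := Finset.card_le_card_of_injOn f hmaps hinj
  rwa [Finset.card_powersetCard] at this

lemma normal_insert {C : Type u} (χ : ℕ → ℕ → C) (X : Finset ℕ) (z : ℕ)
    (hX : NormalFor χ ↑X) (hz : ∀ x ∈ X, x < z)
    (hnb : ¬ ∃ x ∈ X, ∃ a₀ ∈ X, ∃ a₁ ∈ X, a₀ < a₁ ∧ χ x z = χ a₀ a₁) :
    NormalFor χ ↑(insert z X) := by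
  push_neg at hnb
  intro a₀ a₁ b₀ b₁ ha₀ ha₁ hb₀ hb₁ hlt₁ hlt₂ hc
  simp only [Finset.coe_insert, Set.mem_insert_iff, Finset.mem_coe] at ha₀ ha₁ hb₀ hb₁
  rcases ha₁ with rfl | ha₁
  · rcases hb₁ with rfl | hb₁
    · rfl
    · have ha₀' : a₀ ∈ X := by
        rcases ha₀ with rfl | h
        · omega
        · exact h
      have hb₀' : b₀ ∈ X := by
        rcases hb₀ with rfl | h
        · have := hz b₁ hb₁; omega
        · exact h
      exact absurd hc (hnb a₀ ha₀' b₀ hb₀' b₁ hb₁ hlt₂)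
  · rcases hb₁ with rfl | hb₁
    · have hb₀' : b₀ ∈ X := by
        rcases hb₀ with rfl | h
        · omega
        · exact h
      have ha₀' : a₀ ∈ X := by
        rcases ha₀ with rfl | h
        · have := hz a₁ ha₁; omega
        · exact h
      exact absurd hc.symm (hnb b₀ hb₀' a₀ ha₀' a₁ ha₁ hlt₁)
    · have ha₀' : a₀ ∈ X := by
        rcases ha₀ with rfl | h
        · have := hz a₁ ha₁; omega
        · exact h
      have hb₀' : b₀ ∈ X := by
        rcases hb₀ with rfl | h
        · have := hz b₁ hb₁; omega
        · exact h
      exact hX a₀ a₁ b₀ b₁ ha₀' ha₁ hb₀' hb₁ hlt₁ hlt₂ hc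

lemma main_lemma {C : Type u} (χ : ℕ → ℕ → C) (hχ : TwoBounded χ) :
    ∀ (n : ℕ) (X Z : Finset ℕ), NormalFor χ ↑X →
      (∀ x ∈ X, ∀ z ∈ Z, x < z) → NrmF X.card n ≤ Z.card →
      ∃ Y : Finset ℕ, Y ⊆ Z ∧ n ≤ Y.card ∧ NormalFor χ ↑(X ∪ Y) := by
  intro n
  induction n with
  | zero =>
    intro X Z hX _ _
    exact ⟨∅, Finset.empty_subset _, le_refl 0, by simpa using hX⟩
  | succ n ih =>
    intro X Z hX hXZ hcard
    classical
    set B := Z.filter (fun z => ∃ t : ℕ × ℕ × ℕ, t.1 ∈ X ∧ t.2.1 ∈ X ∧ t.2.2 ∈ X ∧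
      t.2.1 < t.2.2 ∧ χ t.1 z = χ t.2.1 t.2.2) with hB
    have hBZ : B ⊆ Z := Finset.filter_subset _ _
    have hBcard : B.card ≤ X.card.choose 2 :=
      bad_card hχ X Z B hXZ hBZ (fun z hz => (Finset.mem_filter.mp hz).2)
    have hrec : NrmF X.card (n + 1) = X.card.choose 2 + 1 + NrmF (X.card + 1) n :=
      NrmF_rec _ _
    have hne : (Z \ B).Nonempty := by
      rw [← Finset.card_pos, Finset.card_sdiff_of_subset hBZ]
      have := Finset.card_le_card hBZ
      omega
    set z := (Z \ B).min' hne with hzdef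
    have hzmem : z ∈ Z \ B := Finset.min'_mem _ _
    have hzZ : z ∈ Z := (Finset.mem_sdiff.mp hzmem).1
    have hzB : z ∉ B := (Finset.mem_sdiff.mp hzmem).2
    have hzX : ∀ x ∈ X, x < z := fun x hx => hXZ x hx z hzZ
    have hznX : z ∉ X := fun h => lt_irrefl z (hzX z h)
    set Z' := (Z \ B).erase z with hZ'
    have hZ'card : NrmF (X.card + 1) n ≤ Z'.card := by
      rw [hZ', Finset.card_erase_of_mem hzmem, Finset.card_sdiff_of_subset hBZ]
      have := Finset.card_le_card hBZ
      omega
    have hX' : NormalFor χ ↑(insert z X) := by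
      apply normal_insert χ X z hX hzX
      rintro ⟨x, hx, a₀, ha₀, a₁, ha₁, hlt, hc⟩
      exact hzB (Finset.mem_filter.mpr ⟨hzZ, ⟨(x, a₀, a₁), hx, ha₀, ha₁, hlt, hc⟩⟩)
    have hord : ∀ x ∈ insert z X, ∀ w ∈ Z', x < w := by
      intro x hx w hw
      have hwz : w ∈ Z \ B := Finset.mem_of_mem_erase hw
      have hwne : w ≠ z := Finset.ne_of_mem_erase hw
      have hzw : z < w := lt_of_le_of_ne (Finset.min'_le _ _ hwz) (Ne.symm hwne)
      rcases Finset.mem_insert.mp hx with rfl | hx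
      · exact hzw
      · exact hXZ x hx w (Finset.mem_sdiff.mp hwz).1
    have hcard' : (insert z X).card = X.card + 1 := Finset.card_insert_of_notMem hznX
    obtain ⟨Y', hY'Z, hY'card, hY'norm⟩ :=
      ih (insert z X) Z' hX' hord (by rw [hcard']; exact hZ'card)
    refine ⟨insert z Y', ?_, ?_, ?_⟩
    · intro y hy
      rcases Finset.mem_insert.mp hy with rfl | hy
      · exact hzZ
      · exact (Finset.mem_sdiff.mp (Finset.mem_of_mem_erase (hY'Z hy))).1
    · have hzY' : z ∉ Y' := fun h => Finset.notMem_erase z _ (hY'Z h)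
      rw [Finset.card_insert_of_notMem hzY']
      omega
    · have heq : X ∪ insert z Y' = insert z X ∪ Y' := by
        ext w
        simp only [Finset.mem_union, Finset.mem_insert]
        tauto
      rw [heq]
      exact hY'norm

/-- There is a function `Nrm`, given by the displayed recursion, such that any finite set `Z`
above a normal set `X` of size `p` with `|Z| ≥ Nrm p n` contains a subset `Y` of size at
least `n` with `X ∪ Y` normal. -/
theorem exists_Nrm : ∃ Nrm : ℕ → ℕ → ℕ,
    (∀ p, Nrm p 0 = 0) ∧
    (∀ p n, Nrm p (n + 1) = Nrm p n + (p + n).choose 2 + 1) ∧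
    (∀ (C : Type u) (χ : ℕ → ℕ → C), TwoBounded χ →
      ∀ (p n : ℕ) (X Z : Finset ℕ), NormalFor χ ↑X → X.card = p →
        (∀ x ∈ X, ∀ z ∈ Z, x < z) → Nrm p n ≤ Z.card →
        ∃ Y : Finset ℕ, Y ⊆ Z ∧ n ≤ Y.card ∧ NormalFor χ ↑(X ∪ Y)) := by
  refine ⟨NrmF, fun _ => rfl, fun _ _ => rfl, ?_⟩
  intro C χ hχ p n X Z hX hp hXZ hcard
  subst hp
  exact main_lemma χ hχ n X Z hX hXZ hcard
end
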